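/- arXiv:0812.5092 — 2 statements merged into one kernel-verified Lean document; each statement's English description precedes it below -/
import Mathlib

section
/- Every pseudonorm defined on a subgroup H of an abelian group G extends to a pseudonorm on G. -/
/-!
Zorn's lemma, applied to pseudonorms defined on subgroups ordered by extension; a maximal one is
defined everywhere. Indeed, for `q` defined on `K` and any `g`, let `n₀` generate the subgroup
`{n : ℤ | n • g ∈ K}` and `c = q (n₀ • g) / |n₀|`, so that `q (n • g) ≤ |n| * c` whenever
`n • g ∈ K`. Then `x ↦ inf {q k + |n| * c | k ∈ K, k + n • g = x}` is a pseudonorm on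
`K ⊔ zmultiples g` that agrees with `q` on `K`. Nonnegativity is automatic:
`0 = q (x - x) ≤ 2 * q x`.
-/

open AddSubgroup

/-- The values of `toFun` outside `dom` are irrelevant. -/
structure PartialPseudonorm (G : Type*) [AddCommGroup G] where
  dom : AddSubgroup G
  toFun : G → ℝ
  map_zero : toFun 0 = 0
  map_neg : ∀ x ∈ dom, toFun (-x) = toFun x
  map_add_le : ∀ x ∈ dom, ∀ y ∈ dom, toFun (x + y) ≤ toFun x + toFun y

namespace PartialPseudonorm

variable {G : Type*} [AddCommGroup G]

instance : Preorder (PartialPseudonorm G) where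
  le e f := e.dom ≤ f.dom ∧ ∀ x ∈ e.dom, f.toFun x = e.toFun x
  le_refl e := ⟨le_rfl, fun _ _ => rfl⟩
  le_trans e f g hef hfg :=
    ⟨hef.1.trans hfg.1, fun x hx => (hfg.2 x (hef.1 hx)).trans (hef.2 x hx)⟩

variable (e : PartialPseudonorm G)

lemma nonneg {x : G} (hx : x ∈ e.dom) : 0 ≤ e.toFun x := by
  have h := e.map_add_le x hx (-x) (neg_mem hx)
  rw [add_neg_cancel, e.map_zero, e.map_neg x hx] at h
  linarith

lemma map_nsmul_le (n : ℕ) {x : G} (hx : x ∈ e.dom) : e.toFun (n • x) ≤ n * e.toFun x := by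
  induction n with
  | zero => simp [e.map_zero]
  | succ n ih =>
    calc e.toFun ((n + 1) • x) ≤ e.toFun (n • x) + e.toFun x := by
          rw [succ_nsmul]; exact e.map_add_le _ (nsmul_mem hx n) _ hx
      _ ≤ (n + 1 : ℕ) * e.toFun x := by push_cast; linarith

lemma map_zsmul_le (n : ℤ) {x : G} (hx : x ∈ e.dom) : e.toFun (n • x) ≤ |n| * e.toFun x := by
  obtain ⟨m, rfl | rfl⟩ := Int.eq_nat_or_neg n
  · simpa using e.map_nsmul_le m hx
  · rw [neg_smul, e.map_neg _ (zsmul_mem hx _)]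
    simpa using e.map_nsmul_le m hx

lemma exists_map_zsmul_le (g : G) :
    ∃ c, 0 ≤ c ∧ ∀ n : ℤ, n • g ∈ e.dom → e.toFun (n • g) ≤ |n| * c := by
  obtain ⟨n₀, hn₀⟩ := Int.subgroup_cyclic (e.dom.comap (zmultiplesHom G g))
  have hmem : ∀ n : ℤ, n • g ∈ e.dom ↔ ∃ d : ℤ, d * n₀ = n := by
    intro n
    simpa [← zmultiples_eq_closure, mem_zmultiples_iff] using
      (SetLike.ext_iff.mp hn₀ n)
  have hn₀g : n₀ • g ∈ e.dom := (hmem n₀).mpr ⟨1, one_mul n₀⟩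
  refine ⟨e.toFun (n₀ • g) / |n₀|, by have := e.nonneg hn₀g; positivity, ?_⟩
  rintro n hn
  obtain ⟨d, rfl⟩ := (hmem n).mp hn
  rcases eq_or_ne n₀ 0 with rfl | hn₀
  · simp [e.map_zero]
  calc e.toFun ((d * n₀) • g) ≤ |d| * e.toFun (n₀ • g) := by
        rw [mul_smul]; exact e.map_zsmul_le d hn₀g
    _ = |(d * n₀ : ℤ)| * (e.toFun (n₀ • g) / |n₀|) := by
        push_cast
        rw [abs_mul]
        field_simp

lemma mem_sup_zmultiples_iff {K : AddSubgroup G} {g x : G} :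
    x ∈ K ⊔ zmultiples g ↔ ∃ k ∈ K, ∃ n : ℤ, k + n • g = x := by
  simp only [mem_sup, mem_zmultiples_iff, exists_exists_eq_and]

section Extend

variable {e} {g : G} {c : ℝ}

noncomputable def extendFun (e : PartialPseudonorm G) (g : G) (c : ℝ) (x : G) : ℝ :=
  sInf {r | ∃ k ∈ e.dom, ∃ n : ℤ, k + n • g = x ∧ r = e.toFun k + |n| * c}

lemma extendFun_le (hc0 : 0 ≤ c) {k : G} (hk : k ∈ e.dom) (n : ℤ) :
    extendFun e g c (k + n • g) ≤ e.toFun k + |n| * c := by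
  refine csInf_le ⟨0, ?_⟩ ⟨k, hk, n, rfl, rfl⟩
  rintro r ⟨k', hk', n', -, rfl⟩
  have := e.nonneg hk'
  positivity

lemma le_extendFun {x : G} (hx : x ∈ e.dom ⊔ zmultiples g) {b : ℝ}
    (h : ∀ k ∈ e.dom, ∀ n : ℤ, k + n • g = x → b ≤ e.toFun k + |n| * c) :
    b ≤ extendFun e g c x := by
  obtain ⟨k, hk, n, rfl⟩ := mem_sup_zmultiples_iff.mp hx
  refine le_csInf ⟨_, k, hk, n, rfl, rfl⟩ ?_
  rintro r ⟨k', hk', n', hx', rfl⟩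
  exact h k' hk' n' hx'

lemma extendFun_eq (hc0 : 0 ≤ c)
    (hc : ∀ n : ℤ, n • g ∈ e.dom → e.toFun (n • g) ≤ |n| * c) {x : G} (hx : x ∈ e.dom) :
    extendFun e g c x = e.toFun x := by
  refine le_antisymm (by simpa using extendFun_le hc0 hx 0) ?_
  refine le_extendFun (mem_sup_left hx) fun k hk n hkx => ?_
  have hng : n • g ∈ e.dom := by
    rw [← add_sub_cancel_left k (n • g), hkx]; exact sub_mem hx hk
  calc e.toFun x = e.toFun (k + n • g) := by rw [hkx]
    _ ≤ e.toFun k + e.toFun (n • g) := e.map_add_le k hk _ hng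
    _ ≤ e.toFun k + |n| * c := by gcongr; exact hc n hng

lemma extendFun_neg_le (hc0 : 0 ≤ c) {x : G} (hx : x ∈ e.dom ⊔ zmultiples g) :
    extendFun e g c (-x) ≤ extendFun e g c x := by
  refine le_extendFun hx fun k hk n hkx => ?_
  calc extendFun e g c (-x) = extendFun e g c (-k + (-n) • g) := by
        rw [← hkx, neg_smul, neg_add]
    _ ≤ e.toFun (-k) + |(-n : ℤ)| * c := extendFun_le hc0 (neg_mem hk) _
    _ = e.toFun k + |n| * c := by rw [e.map_neg k hk]; push_cast; rw [abs_neg]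

lemma extendFun_add_le (hc0 : 0 ≤ c) {x y : G} (hx : x ∈ e.dom ⊔ zmultiples g)
    (hy : y ∈ e.dom ⊔ zmultiples g) :
    extendFun e g c (x + y) ≤ extendFun e g c x + extendFun e g c y := by
  rw [← sub_le_iff_le_add]
  refine le_extendFun hx fun k hk n hkx => ?_
  rw [sub_le_comm]
  refine le_extendFun hy fun k' hk' n' hky => ?_
  rw [sub_le_iff_le_add']
  have habs : ((|n + n'| : ℤ) : ℝ) ≤ |n| + |n'| := by exact_mod_cast abs_add_le n n'
  calc extendFun e g c (x + y) = extendFun e g c ((k + k') + (n + n') • g) := by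
        rw [← hkx, ← hky, add_smul]; abel_nf
    _ ≤ e.toFun (k + k') + |n + n'| * c := extendFun_le hc0 (add_mem hk hk') _
    _ ≤ e.toFun k + |n| * c + (e.toFun k' + |n'| * c) := by
        linarith [e.map_add_le k hk k' hk', mul_le_mul_of_nonneg_right habs hc0]

end Extend

lemma exists_le_and_mem (g : G) : ∃ f : PartialPseudonorm G, e ≤ f ∧ g ∈ f.dom := by
  obtain ⟨c, hc0, hc⟩ := e.exists_map_zsmul_le g
  refine ⟨⟨e.dom ⊔ zmultiples g, extendFun e g c, ?_, ?_, ?_⟩, ⟨le_sup_left, ?_⟩, ?_⟩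
  · rw [extendFun_eq hc0 hc (zero_mem _), e.map_zero]
  · intro x hx
    refine le_antisymm (extendFun_neg_le hc0 hx) ?_
    simpa using extendFun_neg_le hc0 (neg_mem hx)
  · exact fun x hx y hy => extendFun_add_le hc0 hx hy
  · exact fun x hx => extendFun_eq hc0 hc hx
  · exact mem_sup_right (mem_zmultiples g)

lemma dom_eq_top_of_isMax (he : IsMax e) : e.dom = ⊤ := by
  refine eq_top_iff.mpr fun g _ => ?_
  obtain ⟨f, hef, hg⟩ := e.exists_le_and_mem g
  exact (he hef).1 hg

lemma exists_upperBound_of_isChain {c : Set (PartialPseudonorm G)} (hc : IsChain (· ≤ ·) c)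
    (hne : c.Nonempty) : ∃ u : PartialPseudonorm G, ∀ e ∈ c, e ≤ u := by
  classical
  have : Nonempty c := hne.to_subtype
  have hdir : Directed (· ≤ ·) fun e : c => e.1.dom := fun a b =>
    (hc.total a.2 b.2).elim (fun h => ⟨b, h.1, le_rfl⟩) (fun h => ⟨a, le_rfl, h.1⟩)
  have hmem {x : G} : x ∈ ⨆ e : c, e.1.dom ↔ ∃ e ∈ c, x ∈ e.dom := by
    simp [mem_iSup_of_directed hdir]
  let u : G → ℝ := fun x => if h : ∃ e ∈ c, x ∈ e.dom then h.choose.toFun x else 0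
  have hu {e : PartialPseudonorm G} (he : e ∈ c) {x : G} (hx : x ∈ e.dom) : u x = e.toFun x := by
    have h : ∃ e ∈ c, x ∈ e.dom := ⟨e, he, hx⟩
    obtain ⟨he', hx'⟩ := h.choose_spec
    simp only [u, dif_pos h]
    rcases hc.total he' he with h' | h'
    · exact (h'.2 x hx').symm
    · exact h'.2 x hx
  have hpair {x y : G} (hx : x ∈ ⨆ e : c, e.1.dom) (hy : y ∈ ⨆ e : c, e.1.dom) :
      ∃ e ∈ c, x ∈ e.dom ∧ y ∈ e.dom := by
    obtain ⟨a, ha, hxa⟩ := hmem.mp hx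
    obtain ⟨b, hb, hyb⟩ := hmem.mp hy
    rcases hc.total ha hb with h | h
    · exact ⟨b, hb, h.1 hxa, hyb⟩
    · exact ⟨a, ha, hxa, h.1 hyb⟩
  obtain ⟨e₀, he₀⟩ := hne
  refine ⟨⟨⨆ e : c, e.1.dom, u, ?_, ?_, ?_⟩, fun e he => ⟨?_, fun x hx => hu he hx⟩⟩
  · rw [hu he₀ (zero_mem _), e₀.map_zero]
  · intro x hx
    obtain ⟨e, he, hxe⟩ := hmem.mp hx
    rw [hu he (neg_mem hxe), hu he hxe, e.map_neg x hxe]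
  · intro x hx y hy
    obtain ⟨e, he, hxe, hye⟩ := hpair hx hy
    rw [hu he (add_mem hxe hye), hu he hxe, hu he hye]
    exact e.map_add_le x hxe y hye
  · exact fun x hx => hmem.mpr ⟨e, he, hx⟩

end PartialPseudonorm

theorem pseudonorm_extends_general (G : Type) [AddCommGroup G] (H : AddSubgroup G)
    (p : H → ℝ) (hp0 : p 0 = 0) (hpneg : ∀ x : H, p (-x) = p x)
    (hptri : ∀ x y : H, p (x + y) ≤ p x + p y) :
    ∃ q : G → ℝ, q 0 = 0 ∧ (∀ x : G, q (-x) = q x) ∧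
      (∀ x y : G, q (x + y) ≤ q x + q y) ∧ (∀ x : G, 0 ≤ q x) ∧
      ∀ x : H, q (x : G) = p x := by
  classical
  let e₀ : PartialPseudonorm G :=
    { dom := H
      toFun := fun x => if h : x ∈ H then p ⟨x, h⟩ else 0
      map_zero := by rw [dif_pos (zero_mem H)]; exact hp0
      map_neg := fun x hx => by
        rw [dif_pos (neg_mem hx), dif_pos hx]; exact hpneg ⟨x, hx⟩
      map_add_le := fun x hx y hy => by
        rw [dif_pos (add_mem hx hy), dif_pos hx, dif_pos hy]; exact hptri ⟨x, hx⟩ ⟨y, hy⟩ }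
  obtain ⟨m, he₀m, hm⟩ := zorn_le_nonempty_Ici₀ e₀
    (fun c _ hc y hy => PartialPseudonorm.exists_upperBound_of_isChain hc ⟨y, hy⟩) e₀ le_rfl
  have hdom (x : G) : x ∈ m.dom := m.dom_eq_top_of_isMax hm ▸ mem_top x
  refine ⟨m.toFun, m.map_zero, fun x => m.map_neg x (hdom x),
    fun x y => m.map_add_le x (hdom x) y (hdom y), fun x => m.nonneg (hdom x), fun x => ?_⟩
  simpa [e₀] using he₀m.2 x x.2

/-- Every pseudonorm on a subgroup `H` of an abelian group `G`
extends to a pseudonorm on `G`. -/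
theorem pseudonorm_extends (G : Type) [AddCommGroup G] (H : AddSubgroup G)
    (p : H → ℝ) (hp0 : p 0 = 0) (hpneg : ∀ x : H, p (-x) = p x)
    (hptri : ∀ x y : H, p (x + y) ≤ p x + p y) (hpnonneg : ∀ x : H, 0 ≤ p x) :
    ∃ q : G → ℝ, q 0 = 0 ∧ (∀ x : G, q (-x) = q x) ∧
      (∀ x y : G, q (x + y) ≤ q x + q y) ∧ (∀ x : G, 0 ≤ q x) ∧
      ∀ x : H, q (x : G) = p x :=
  pseudonorm_extends_general G H p hp0 hpneg hptri
end

section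
/- If the product X × Y of two nonempty metric spaces (with the sup metric) is straight, then both X and Y are straight. -/
/-- A metric space is *straight* if for every finite cover by closed sets,
every real-valued function that is uniformly continuous on each member of the
cover is uniformly continuous on the whole space. -/
def Straight (X : Type) [MetricSpace X] : Prop :=
  ∀ (n : ℕ) (C : Fin n → Set X), (∀ i, IsClosed (C i)) → (⋃ i, C i) = Set.univ →
    ∀ f : X → ℝ, (∀ i, UniformContinuousOn f (C i)) → UniformContinuous f

/-- A metric space is *uniformly locally connected* if for every `ε > 0` there is `δ > 0`
such that any two points at distance `< δ` lie in a connected set of diameter `< ε`. -/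
def ULC (X : Type) [MetricSpace X] : Prop :=
  ∀ ε > (0 : ℝ), ∃ δ > (0 : ℝ), ∀ x y : X, dist x y < δ →
    ∃ S : Set X, IsConnected S ∧ x ∈ S ∧ y ∈ S ∧ Metric.diam S < ε

/-- A uniform retract of a straight space is straight: pull the cover back along the
retraction `π`, and recover `f` from `f ∘ π` by composing with the section `s`. -/
theorem Straight.of_leftInverse {Z X : Type} [MetricSpace Z] [MetricSpace X]
    (hZ : Straight Z) {π : Z → X} {s : X → Z} (hπ : UniformContinuous π)
    (hs : UniformContinuous s) (hπs : Function.LeftInverse π s) : Straight X := by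
  intro n C hC hcov f hf
  have hfπ : UniformContinuous (f ∘ π) :=
    hZ n (fun i => π ⁻¹' C i) (fun i => (hC i).preimage hπ.continuous)
      (by rw [← Set.preimage_iUnion, hcov, Set.preimage_univ]) (f ∘ π)
      (fun i => (hf i).comp hπ.uniformContinuousOn (Set.mapsTo_preimage π _))
  simpa only [Function.comp_assoc, hπs.comp_eq_id, Function.comp_id] using hfπ.comp hs

/-- If the product of two nonempty metric spaces (with the sup metric) is straight,
then both factors are straight. -/
theorem straight_of_straight_prod (X Y : Type) [MetricSpace X] [MetricSpace Y]
    [Nonempty X] [Nonempty Y] (h : Straight (X × Y)) : Straight X ∧ Straight Y := by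
  obtain ⟨x₀⟩ := ‹Nonempty X›
  obtain ⟨y₀⟩ := ‹Nonempty Y›
  exact ⟨h.of_leftInverse (s := fun x => (x, y₀)) uniformContinuous_fst
      (uniformContinuous_id.prodMk uniformContinuous_const) fun _ => rfl,
    h.of_leftInverse (s := fun y => (x₀, y)) uniformContinuous_snd
      (uniformContinuous_const.prodMk uniformContinuous_id) fun _ => rfl⟩
end
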